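/- Bound on the unnormalized edge Laplacian block (Proposition 6.1(1)). Let G be a locally finite simple graph on a countable vertex type V, let E⃗ = {(x,y) ∈ V × V : x and y adjacent in G}, and assume every edge of G shares an endpoint with at most D_L other edges. Define B on ℓ²(E⃗) by (Bf)(x,y) = 2·f(x,y) + ∑ f(u,v), the sum over all oriented edges (u,v) whose underlying unordered edge {u,v} is different from {x,y} and shares an endpoint with {x,y}. Then B is a well-defined bounded symmetric operator on ℓ²(E⃗) with ‖B‖ ≤ 2·D_L + 2. -/

import Mathlib

open scoped InnerProductSpace ComplexConjugate

/-- The set of oriented edges of a simple graph `G`. -/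
def OrientedEdge {V : Type*} (G : SimpleGraph V) : Type _ :=
  {p : V × V // G.Adj p.1 p.2}

/-!
`B = 2 • 1 + A`, where `A` is the adjacency operator of the symmetric relation "the underlying
edges are distinct and share an endpoint" on oriented edges. Since an unordered edge has two
orientations, every row of `A` has at most `2 D_L` nonzero entries, and by symmetry so has every
column. Cauchy–Schwarz on each row followed by counting how often each coordinate occurs gives
`‖A f‖² ≤ (2 D_L)² ‖f‖²` (the Schur test), and `A` is symmetric because its matrix is; the latter
is checked on the basis vectors `lp.single` and extended by continuity.
-/

open Finset

section NeighborSum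

variable {ι E : Type*}

theorem norm_sq_sum_le_card_mul [SeminormedAddCommGroup E] (s : Finset ι) (f : ι → E) :
    ‖∑ j ∈ s, f j‖ ^ 2 ≤ #s * ∑ j ∈ s, ‖f j‖ ^ 2 :=
  (pow_le_pow_left₀ (norm_nonneg _) (norm_sum_le _ _) 2).trans sq_sum_le_card_mul_sum_sq

/-- By symmetry, each `j` occurs in at most `#(N j) ≤ c` of the inner sums. -/
theorem sum_sum_le_mul_sum_biUnion [DecidableEq ι] {N : ι → Finset ι}
    (hN : ∀ i j, j ∈ N i ↔ i ∈ N j) {c : ℝ} (hcard : ∀ i, (#(N i) : ℝ) ≤ c)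
    {g : ι → ℝ} (hg : ∀ i, 0 ≤ g i) (s : Finset ι) :
    ∑ i ∈ s, ∑ j ∈ N i, g j ≤ c * ∑ j ∈ s.biUnion N, g j := by
  rw [sum_comm' (t' := s.biUnion N) (s' := fun j => {i ∈ s | j ∈ N i})
    (fun i j => by simp only [mem_filter, mem_biUnion]; constructor <;> grind), mul_sum]
  refine sum_le_sum fun j _ => ?_
  rw [sum_const, nsmul_eq_mul]
  refine mul_le_mul_of_nonneg_right (le_trans ?_ (hcard j)) (hg j)
  exact_mod_cast card_le_card fun i hi => (hN i j).1 (mem_filter.1 hi).2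

theorem sum_norm_sq_sum_le_mul_sum_biUnion [SeminormedAddCommGroup E] [DecidableEq ι]
    {N : ι → Finset ι} (hN : ∀ i j, j ∈ N i ↔ i ∈ N j) {c : ℝ} (hc : 0 ≤ c)
    (hcard : ∀ i, (#(N i) : ℝ) ≤ c) (f : ι → E) (s : Finset ι) :
    ∑ i ∈ s, ‖∑ j ∈ N i, f j‖ ^ 2 ≤ c ^ 2 * ∑ j ∈ s.biUnion N, ‖f j‖ ^ 2 :=
  calc ∑ i ∈ s, ‖∑ j ∈ N i, f j‖ ^ 2
      ≤ ∑ i ∈ s, c * ∑ j ∈ N i, ‖f j‖ ^ 2 := sum_le_sum fun i _ =>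
        (norm_sq_sum_le_card_mul _ _).trans
          (mul_le_mul_of_nonneg_right (hcard i) (sum_nonneg fun _ _ => sq_nonneg _))
    _ ≤ c * (c * ∑ j ∈ s.biUnion N, ‖f j‖ ^ 2) := by
        rw [← mul_sum]
        exact mul_le_mul_of_nonneg_left
          (sum_sum_le_mul_sum_biUnion hN hcard (fun _ => sq_nonneg _) s) hc
    _ = c ^ 2 * ∑ j ∈ s.biUnion N, ‖f j‖ ^ 2 := by ring

theorem lp.sum_norm_sq_le [NormedAddCommGroup E] (f : lp (fun _ : ι => E) 2) (s : Finset ι) :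
    ∑ i ∈ s, ‖f i‖ ^ 2 ≤ ‖f‖ ^ 2 := by
  simpa using lp.sum_rpow_le_norm_rpow (p := 2) (by norm_num) f s

theorem lp.sum_norm_sq_sum_le [NormedAddCommGroup E] {N : ι → Finset ι}
    (hN : ∀ i j, j ∈ N i ↔ i ∈ N j) {c : ℝ} (hc : 0 ≤ c) (hcard : ∀ i, (#(N i) : ℝ) ≤ c)
    (f : lp (fun _ : ι => E) 2) (s : Finset ι) :
    ∑ i ∈ s, ‖∑ j ∈ N i, f j‖ ^ 2 ≤ (c * ‖f‖) ^ 2 := by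
  classical
  calc ∑ i ∈ s, ‖∑ j ∈ N i, f j‖ ^ 2 ≤ c ^ 2 * ∑ j ∈ s.biUnion N, ‖f j‖ ^ 2 :=
        sum_norm_sq_sum_le_mul_sum_biUnion hN hc hcard _ s
    _ ≤ (c * ‖f‖) ^ 2 := by
        rw [mul_pow]
        exact mul_le_mul_of_nonneg_left (lp.sum_norm_sq_le f _) (sq_nonneg c)

theorem lp.memℓp_sum [NormedAddCommGroup E] {N : ι → Finset ι}
    (hN : ∀ i j, j ∈ N i ↔ i ∈ N j) {c : ℝ} (hc : 0 ≤ c) (hcard : ∀ i, (#(N i) : ℝ) ≤ c)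
    (f : lp (fun _ : ι => E) 2) : Memℓp (fun i => ∑ j ∈ N i, f j) 2 :=
  memℓp_gen' (C := (c * ‖f‖) ^ 2) fun s => by
    simpa using lp.sum_norm_sq_sum_le hN hc hcard f s

variable (𝕜 : Type*) [NontriviallyNormedField 𝕜]

noncomputable def lp.neighborSum [NormedAddCommGroup E] [NormedSpace 𝕜 E] (N : ι → Finset ι)
    (hN : ∀ i j, j ∈ N i ↔ i ∈ N j) {c : ℝ} (hc : 0 ≤ c) (hcard : ∀ i, (#(N i) : ℝ) ≤ c) :
    lp (fun _ : ι => E) 2 →L[𝕜] lp (fun _ : ι => E) 2 :=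
  LinearMap.mkContinuous
    { toFun f := ⟨fun i => ∑ j ∈ N i, f j, lp.memℓp_sum hN hc hcard f⟩
      map_add' f g := by ext i; exact sum_add_distrib
      map_smul' a f := by ext i; simp [smul_sum] }
    c fun f => by
      refine lp.norm_le_of_forall_sum_le (p := 2) (by norm_num) (by positivity) fun s => ?_
      simpa using lp.sum_norm_sq_sum_le hN hc hcard f s

variable {𝕜} [NormedAddCommGroup E] [NormedSpace 𝕜 E] {N : ι → Finset ι}
  {hN : ∀ i j, j ∈ N i ↔ i ∈ N j} {c : ℝ} {hc : 0 ≤ c} {hcard : ∀ i, (#(N i) : ℝ) ≤ c}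

theorem lp.neighborSum_apply (f : lp (fun _ : ι => E) 2) (i : ι) :
    lp.neighborSum 𝕜 N hN hc hcard f i = ∑ j ∈ N i, f j := rfl

theorem lp.norm_neighborSum_le : ‖lp.neighborSum (E := E) 𝕜 N hN hc hcard‖ ≤ c :=
  LinearMap.mkContinuous_norm_le _ hc _

end NeighborSum

section Symmetric

variable {ι 𝕜 E : Type*} [RCLike 𝕜] [NormedAddCommGroup E] [InnerProductSpace 𝕜 E]

theorem lp.isSymmetric_of_inner_single [DecidableEq ι]
    (T : lp (fun _ : ι => E) 2 →L[𝕜] lp (fun _ : ι => E) 2)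
    (h : ∀ i j (a b : E),
      ⟪T (lp.single 2 i a), lp.single 2 j b⟫_𝕜 = ⟪lp.single 2 i a, T (lp.single 2 j b)⟫_𝕜) :
    (T : lp (fun _ : ι => E) 2 →ₗ[𝕜] lp (fun _ : ι => E) 2).IsSymmetric := by
  have expand (x u : lp (fun _ : ι => E) 2) :
      HasSum (fun i => ⟪x, lp.single 2 i (u i)⟫_𝕜) ⟪x, u⟫_𝕜 :=
    (innerSL 𝕜 x).hasSum (lp.hasSum_single (by norm_num) u)
  have expand_map (x u : lp (fun _ : ι => E) 2) :
      HasSum (fun i => ⟪x, T (lp.single 2 i (u i))⟫_𝕜) ⟪x, T u⟫_𝕜 :=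
    ((innerSL 𝕜 x).comp T).hasSum (lp.hasSum_single (by norm_num) u)
  have single_left (i : ι) (a : E) (g : lp (fun _ : ι => E) 2) :
      ⟪T (lp.single 2 i a), g⟫_𝕜 = ⟪lp.single 2 i a, T g⟫_𝕜 := by
    refine (expand _ g).unique ?_
    simpa only [h] using expand_map (lp.single 2 i a) g
  intro f g
  rw [ContinuousLinearMap.coe_coe, ← inner_conj_symm, ← inner_conj_symm f]
  congr 1
  refine (expand_map g f).unique ?_
  convert expand (T g) f using 2 with i
  rw [← inner_conj_symm, single_left, inner_conj_symm]

theorem lp.isSymmetric_neighborSum {N : ι → Finset ι} (hN : ∀ i j, j ∈ N i ↔ i ∈ N j) {c : ℝ}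
    (hc : 0 ≤ c) (hcard : ∀ i, (#(N i) : ℝ) ≤ c) :
    (lp.neighborSum (E := E) 𝕜 N hN hc hcard : lp (fun _ : ι => E) 2 →ₗ[𝕜] _).IsSymmetric := by
  classical
  refine lp.isSymmetric_of_inner_single _ fun i j a b => ?_
  simp only [lp.inner_single_left, lp.inner_single_right, lp.neighborSum_apply,
    lp.single_apply, sum_pi_single', hN j i]
  split_ifs <;> simp

end Symmetric

theorem tsum_ite_mul_eq_sum {ι R : Type*} [NonAssocSemiring R] [TopologicalSpace R]
    (s : Finset ι) {p : ι → Prop} [DecidablePred p] (hp : ∀ i, p i ↔ i ∈ s) (f : ι → R) :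
    ∑' i, (if p i then 1 else 0) * f i = ∑ i ∈ s, f i := by
  classical
  rw [sum_eq_tsum_indicator]
  refine tsum_congr fun i => ?_
  rw [Set.indicator_apply, ite_mul, one_mul, zero_mul]
  exact if_congr (hp i) rfl rfl

namespace OrientedEdge

variable {V : Type*} {G : SimpleGraph V}

def edge (e : OrientedEdge G) : Sym2 V := s(e.1.1, e.1.2)

theorem edge_mem_edgeSet (e : OrientedEdge G) : e.edge ∈ G.edgeSet := e.2

theorem edge_preimage_singleton_subset (a b : V) :
    edge ⁻¹' {s(a, b)} ⊆ (fun e : OrientedEdge G => e.1) ⁻¹' {(a, b), (b, a)} := by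
  rintro ⟨⟨u, v⟩, _⟩ h
  change s(u, v) = s(a, b) at h
  change (u, v) ∈ ({(a, b), (b, a)} : Set (V × V))
  simpa [Sym2.eq_iff] using h

theorem finite_edge_preimage_singleton (z : Sym2 V) :
    (edge ⁻¹' {z} : Set (OrientedEdge G)).Finite := by
  induction z using Sym2.ind with
  | _ a b =>
    exact ((Set.toFinite _).preimage Subtype.val_injective.injOn).subset
      (edge_preimage_singleton_subset a b)

theorem ncard_edge_preimage_singleton_le (z : Sym2 V) :
    (edge ⁻¹' {z} : Set (OrientedEdge G)).ncard ≤ 2 := by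
  induction z using Sym2.ind with
  | _ a b =>
    calc (edge ⁻¹' {s(a, b)} : Set (OrientedEdge G)).ncard
        ≤ ({(a, b), (b, a)} : Set (V × V)).ncard :=
          Set.ncard_le_ncard_of_injOn (·.1) (fun _ he => edge_preimage_singleton_subset a b he)
            Subtype.val_injective.injOn (Set.toFinite _)
      _ ≤ 2 := (Set.ncard_insert_le _ _).trans (by simp)

theorem finite_edge_preimage {M : Set (Sym2 V)} (hM : M.Finite) :
    (edge ⁻¹' M : Set (OrientedEdge G)).Finite :=
  hM.preimage' fun z _ => finite_edge_preimage_singleton z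

theorem ncard_edge_preimage_le {M : Set (Sym2 V)} (hM : M.Finite) :
    (edge ⁻¹' M : Set (OrientedEdge G)).ncard ≤ 2 * M.ncard :=
  calc (edge ⁻¹' M : Set (OrientedEdge G)).ncard
      = (⋃ z ∈ hM.toFinset, edge ⁻¹' {z} : Set (OrientedEdge G)).ncard := by
        congr 1; ext; simp
    _ ≤ ∑ z ∈ hM.toFinset, (edge ⁻¹' {z} : Set (OrientedEdge G)).ncard :=
        set_ncard_biUnion_le _ _
    _ ≤ ∑ _z ∈ hM.toFinset, 2 := sum_le_sum fun z _ => ncard_edge_preimage_singleton_le z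
    _ = 2 * M.ncard := by rw [sum_const, smul_eq_mul, Set.ncard_eq_toFinset_card _ hM, mul_comm]

end OrientedEdge

def SimpleGraph.lineNeighborSet {V : Type*} (G : SimpleGraph V) (e : Sym2 V) : Set (Sym2 V) :=
  {e' | e' ∈ G.edgeSet ∧ e' ≠ e ∧ ∃ v : V, v ∈ e ∧ v ∈ e'}

theorem SimpleGraph.mem_lineNeighborSet_comm {V : Type*} {G : SimpleGraph V} {e e' : Sym2 V}
    (he : e ∈ G.edgeSet) (he' : e' ∈ G.edgeSet) :
    e' ∈ G.lineNeighborSet e ↔ e ∈ G.lineNeighborSet e' := by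
  simp only [SimpleGraph.lineNeighborSet, Set.mem_ofPred_eq, he, he', true_and,
    ne_comm (a := e'), and_comm (a := _ ∈ e)]

theorem OrientedEdge.edge_mem_lineNeighborSet_iff {V : Type*} {G : SimpleGraph V}
    (e e' : OrientedEdge G) :
    e'.edge ∈ G.lineNeighborSet e.edge ↔
      e'.edge ≠ e.edge ∧ (e.1.1 ∈ e'.edge ∨ e.1.2 ∈ e'.edge) := by
  rw [SimpleGraph.lineNeighborSet, Set.mem_ofPred_eq, and_iff_right e'.edge_mem_edgeSet]
  simp only [edge, Sym2.mem_iff, or_and_right, exists_or, exists_eq_left]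

theorem unnormalized_edge_laplacian_bound_general
    (V : Type*) [DecidableEq V]
    (G : SimpleGraph V)
    (DL : ℝ) (hDL : 0 ≤ DL)
    (hdeg : ∀ e ∈ G.edgeSet,
      {e' : Sym2 V | e' ∈ G.edgeSet ∧ e' ≠ e ∧ ∃ v : V, v ∈ e ∧ v ∈ e'}.Finite ∧
      ({e' : Sym2 V | e' ∈ G.edgeSet ∧ e' ≠ e ∧ ∃ v : V, v ∈ e ∧ v ∈ e'}.ncard : ℝ) ≤ DL) :
    ∃ B : lp (fun _ : OrientedEdge G => ℂ) 2 →L[ℂ] lp (fun _ : OrientedEdge G => ℂ) 2,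
      (∀ f : lp (fun _ : OrientedEdge G => ℂ) 2, ∀ e : OrientedEdge G,
        B f e = 2 * f e + ∑' e' : OrientedEdge G,
          (if Sym2.mk e'.1.1 e'.1.2 ≠ Sym2.mk e.1.1 e.1.2 ∧
              (e.1.1 ∈ Sym2.mk e'.1.1 e'.1.2 ∨ e.1.2 ∈ Sym2.mk e'.1.1 e'.1.2) then (1 : ℂ) else 0) * f e') ∧
      ‖B‖ ≤ 2 * DL + 2 ∧
      (∀ f g : lp (fun _ : OrientedEdge G => ℂ) 2, ⟪B f, g⟫_ℂ = ⟪f, B g⟫_ℂ) := by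
  have hfin (e : OrientedEdge G) : (G.lineNeighborSet e.edge).Finite :=
    (hdeg _ e.edge_mem_edgeSet).1
  set N : OrientedEdge G → Finset (OrientedEdge G) :=
    fun e => (OrientedEdge.finite_edge_preimage (hfin e)).toFinset
  have hN (e e' : OrientedEdge G) : e' ∈ N e ↔ e ∈ N e' := by
    simpa [N] using SimpleGraph.mem_lineNeighborSet_comm e.edge_mem_edgeSet e'.edge_mem_edgeSet
  have hcard (e : OrientedEdge G) : (#(N e) : ℝ) ≤ 2 * DL := by
    have hDLe : ((G.lineNeighborSet e.edge).ncard : ℝ) ≤ DL := (hdeg _ e.edge_mem_edgeSet).2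
    rw [← Set.ncard_eq_toFinset_card _ (OrientedEdge.finite_edge_preimage (hfin e))]
    calc _ ≤ ((2 * (G.lineNeighborSet e.edge).ncard : ℕ) : ℝ) :=
          Nat.cast_le.2 (OrientedEdge.ncard_edge_preimage_le (hfin e))
      _ ≤ 2 * DL := by push_cast; linarith
  set A := lp.neighborSum (E := ℂ) ℂ N hN (by positivity) hcard
  refine ⟨(2 : ℂ) • ContinuousLinearMap.id ℂ _ + A, fun f e => ?_, ?_, ?_⟩
  · exact congrArg (2 * f e + ·) (tsum_ite_mul_eq_sum (N e) (fun e' =>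
      (OrientedEdge.edge_mem_lineNeighborSet_iff e e').symm.trans
        (OrientedEdge.finite_edge_preimage (hfin e)).mem_toFinset.symm) f).symm
  · calc ‖(2 : ℂ) • ContinuousLinearMap.id ℂ _ + A‖ ≤ ‖(2 : ℂ)‖ * 1 + 2 * DL :=
          (norm_add_le _ _).trans (add_le_add
            ((norm_smul_le _ _).trans (by gcongr; exact ContinuousLinearMap.norm_id_le))
            lp.norm_neighborSum_le)
      _ = 2 * DL + 2 := by rw [Complex.norm_two]; ring
  · exact (LinearMap.IsSymmetric.id.smul (map_ofNat _ 2)).add (lp.isSymmetric_neighborSum hN _ hcard)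

/-- **Bound on the unnormalized edge Laplacian block (Proposition 6.1(1)).** -/
theorem unnormalized_edge_laplacian_bound
    (V : Type*) [Countable V] [DecidableEq V]
    (G : SimpleGraph V) (hlf : G.LocallyFinite)
    (DL : ℝ) (hDL : 0 ≤ DL)
    (hdeg : ∀ e ∈ G.edgeSet,
      {e' : Sym2 V | e' ∈ G.edgeSet ∧ e' ≠ e ∧ ∃ v : V, v ∈ e ∧ v ∈ e'}.Finite ∧
      ({e' : Sym2 V | e' ∈ G.edgeSet ∧ e' ≠ e ∧ ∃ v : V, v ∈ e ∧ v ∈ e'}.ncard : ℝ) ≤ DL) :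
    ∃ B : lp (fun _ : OrientedEdge G => ℂ) 2 →L[ℂ] lp (fun _ : OrientedEdge G => ℂ) 2,
      (∀ f : lp (fun _ : OrientedEdge G => ℂ) 2, ∀ e : OrientedEdge G,
        B f e = 2 * f e + ∑' e' : OrientedEdge G,
          (if Sym2.mk e'.1.1 e'.1.2 ≠ Sym2.mk e.1.1 e.1.2 ∧
              (e.1.1 ∈ Sym2.mk e'.1.1 e'.1.2 ∨ e.1.2 ∈ Sym2.mk e'.1.1 e'.1.2) then (1 : ℂ) else 0) * f e') ∧
      ‖B‖ ≤ 2 * DL + 2 ∧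
      (∀ f g : lp (fun _ : OrientedEdge G => ℂ) 2, ⟪B f, g⟫_ℂ = ⟪f, B g⟫_ℂ) :=
  unnormalized_edge_laplacian_bound_general V G DL hDL hdeg
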